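/- For integers n > 1 and a ≠ b positive integers, the complete bipartite graph satisfies χ_ld(K_{a,b}[\overline{K_n}]) = 2. -/

import Mathlib

open Finset

open Classical in
/-- The weight of a vertex: sum of labels of its neighbors. -/
noncomputable def ldWeight {V : Type*} (G : SimpleGraph V) [Fintype V] (f : V → ℕ) (v : V) : ℕ :=
  ∑ x ∈ Finset.univ, if G.Adj v x then f x else 0

/-- `f` is a local distance antimagic labeling of `G`: a bijection onto `{1,…,|V|}`
with adjacent vertices getting distinct weights. -/
def IsLDAL {V : Type*} (G : SimpleGraph V) [Fintype V] (f : V → ℕ) : Prop :=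
  Set.BijOn f Set.univ (Set.Icc 1 (Fintype.card V)) ∧
    ∀ ⦃u v : V⦄, G.Adj u v → ldWeight G f u ≠ ldWeight G f v

/-- The local distance antimagic chromatic number: minimum number of distinct weights. -/
noncomputable def chiLD {V : Type*} (G : SimpleGraph V) [Fintype V] : ℕ :=
  sInf {k | ∃ f : V → ℕ, IsLDAL G f ∧ (Finset.univ.image (ldWeight G f)).card = k}

/-- The join `G + H` of two graphs. -/
def graphJoin {α β : Type*} (G : SimpleGraph α) (H : SimpleGraph β) :
    SimpleGraph (α ⊕ β) where
  Adj x y :=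
    match x, y with
    | Sum.inl a, Sum.inl b => G.Adj a b
    | Sum.inr a, Sum.inr b => H.Adj a b
    | Sum.inl _, Sum.inr _ => True
    | Sum.inr _, Sum.inl _ => True
  symm := ⟨by
    rintro (a | a) (b | b) h
    exacts [G.adj_symm h, trivial, trivial, H.adj_symm h]⟩
  loopless := ⟨by
    rintro (a | a) h
    exacts [G.irrefl h, H.irrefl h]⟩

/-- The lexicographic product `G[H]`. -/
def lexProd {α β : Type*} (G : SimpleGraph α) (H : SimpleGraph β) :
    SimpleGraph (α × β) where
  Adj x y := G.Adj x.1 y.1 ∨ (x.1 = y.1 ∧ H.Adj x.2 y.2)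
  symm := ⟨by
    rintro x y (h | ⟨e, h⟩)
    exacts [Or.inl h.symm, Or.inr ⟨e.symm, h.symm⟩]⟩
  loopless := ⟨by
    rintro x (h | ⟨e, h⟩)
    exacts [G.irrefl h, H.irrefl h]⟩

/-- The friendship graph `F_n`: `n` triangles sharing the central vertex `none`. -/
def friendship (n : ℕ) : SimpleGraph (Option (Fin n × Fin 2)) where
  Adj x y := x ≠ y ∧ (x = none ∨ y = none ∨ ∃ i a b, x = some (i, a) ∧ y = some (i, b))
  symm := ⟨by
    rintro x y ⟨hne, h⟩
    refine ⟨hne.symm, ?_⟩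
    rcases h with h | h | ⟨i, a, b, hx, hy⟩
    · exact Or.inr (Or.inl h)
    · exact Or.inl h
    · exact Or.inr (Or.inr ⟨i, b, a, hy, hx⟩)⟩
  loopless := ⟨fun x h => h.1 rfl⟩

/-- The bistar `B_{n,n}`: two adjacent centers, each with `n` leaves. -/
def bistar (n : ℕ) : SimpleGraph (Bool ⊕ Bool × Fin n) where
  Adj x y :=
    match x, y with
    | Sum.inl a, Sum.inl b => a ≠ b
    | Sum.inl a, Sum.inr (c, _) => a = c
    | Sum.inr (c, _), Sum.inl a => a = c
    | Sum.inr _, Sum.inr _ => False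
  symm := ⟨by
    rintro (a | ⟨c, i⟩) (b | ⟨d, j⟩) h
    exacts [h.symm, h, h, h.elim]⟩
  loopless := ⟨by
    rintro (a | ⟨c, i⟩) h
    exacts [h rfl, h]⟩

/-!
In a complete bipartite graph every vertex is adjacent to exactly the other side, so its weight
is the total label on the opposite side: any labelling yields at most two weights, and exactly two
as soon as the two sides carry different totals. The lexicographic product of `K_{a,b}` with an
empty graph is again complete bipartite. If a labelling happens to balance the two sides,
exchanging the labels of two vertices on opposite sides unbalances them.
-/

theorem Fintype.exists_bijOn_Icc_one_card (V : Type*) [Fintype V] :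
    ∃ f : V → ℕ, Set.BijOn f Set.univ (Set.Icc 1 (Fintype.card V)) := by
  let e := Fintype.equivFin V
  refine ⟨fun v => e v + 1, fun v _ => ?_, fun u _ v _ h => e.injective (Fin.ext (by simpa using h)),
    fun m hm => ?_⟩
  · simp [Nat.succ_le_of_lt (e v).isLt]
  · obtain ⟨hm1, hm2⟩ := hm
    exact ⟨e.symm ⟨m - 1, by omega⟩, trivial, by simp; omega⟩

theorem Finset.sum_comp_swap_add {V : Type*} [DecidableEq V] {s : Finset V} {u v : V}
    (hu : u ∈ s) (hv : v ∉ s) (f : V → ℕ) :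
    ∑ x ∈ s, f (Equiv.swap u v x) + f u = ∑ x ∈ s, f x + f v := by
  have hfix : ∀ x ∈ s.erase u, f (Equiv.swap u v x) = f x := fun x hx =>
    congrArg f (Equiv.swap_apply_of_ne_of_ne (Finset.ne_of_mem_erase hx)
      (ne_of_mem_of_not_mem (Finset.mem_of_mem_erase hx) hv))
  rw [← Finset.add_sum_erase s _ hu, ← Finset.add_sum_erase s _ hu, Finset.sum_congr rfl hfix,
    Equiv.swap_apply_left]
  ring

section Bipartition

variable {V : Type*} [Fintype V]

def sideSum (s : V → Bool) (f : V → ℕ) (b : Bool) : ℕ :=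
  ∑ x ∈ univ.filter (fun x => s x = b), f x

theorem sideSum_true_add_false (s : V → Bool) (f : V → ℕ) :
    sideSum s f true + sideSum s f false = ∑ x, f x := by
  simpa [sideSum] using Finset.sum_filter_add_sum_filter_not univ (fun x => s x = true) f

theorem exists_bijOn_sideSum_ne {s : V → Bool} (hs : Function.Surjective s) :
    ∃ f : V → ℕ, Set.BijOn f Set.univ (Set.Icc 1 (Fintype.card V)) ∧
      sideSum s f true ≠ sideSum s f false := by
  classical
  obtain ⟨f, hf⟩ := Fintype.exists_bijOn_Icc_one_card V
  by_cases hf_ne : sideSum s f true ≠ sideSum s f false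
  · exact ⟨f, hf, hf_ne⟩
  obtain ⟨u, hu⟩ := hs true
  obtain ⟨v, hv⟩ := hs false
  have huv : f u ≠ f v := fun h => by
    have := hf.injOn trivial trivial h
    simp_all
  have hswap : Set.BijOn (f ∘ Equiv.swap u v) Set.univ (Set.Icc 1 (Fintype.card V)) :=
    hf.comp (Set.bijOn_univ.mpr (Equiv.swap u v).bijective)
  refine ⟨f ∘ Equiv.swap u v, hswap, fun h => huv ?_⟩
  have hmove := Finset.sum_comp_swap_add (s := univ.filter (fun x => s x = true)) (u := u)
    (v := v) (by simpa using hu) (by simp [hv]) f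
  have htotal := sideSum_true_add_false s (f ∘ Equiv.swap u v)
  rw [Function.comp_def, Equiv.sum_comp (Equiv.swap u v) f] at htotal
  have := sideSum_true_add_false s f
  simp only [sideSum, Function.comp_apply] at *
  omega

theorem ldWeight_eq_sideSum (G : SimpleGraph V) {s : V → Bool} (hG : ∀ u v, G.Adj u v ↔ s u ≠ s v)
    (f : V → ℕ) (v : V) : ldWeight G f v = sideSum s f (!s v) := by
  classical
  rw [ldWeight, sideSum, Finset.sum_filter]
  refine Finset.sum_congr rfl fun x _ => ?_
  rw [hG]
  cases s v <;> cases s x <;> simp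

theorem two_le_card_image_ldWeight {G : SimpleGraph V} {f : V → ℕ} (hf : IsLDAL G f) {u v : V}
    (huv : G.Adj u v) : 2 ≤ (univ.image (ldWeight G f)).card :=
  Finset.one_lt_card.mpr ⟨_, mem_image_of_mem _ (mem_univ u), _, mem_image_of_mem _ (mem_univ v),
    hf.2 huv⟩

theorem chiLD_eq_two_of_adj_iff (G : SimpleGraph V) {s : V → Bool} (hs : Function.Surjective s)
    (hG : ∀ u v, G.Adj u v ↔ s u ≠ s v) : chiLD G = 2 := by
  obtain ⟨u, hu⟩ := hs true
  obtain ⟨v, hv⟩ := hs false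
  have huv : G.Adj u v := by simp [hG, hu, hv]
  obtain ⟨f, hf, hne⟩ := exists_bijOn_sideSum_ne hs
  have hf_ld : IsLDAL G f :=
    ⟨hf, fun x y hxy => by
      rw [ldWeight_eq_sideSum G hG, ldWeight_eq_sideSum G hG]
      have := (hG x y).mp hxy
      cases hx : s x <;> cases hy : s y <;> simp_all [Ne.symm hne]⟩
  have himage : univ.image (ldWeight G f) = {sideSum s f false, sideSum s f true} := by
    ext w
    simp only [mem_image, mem_univ, true_and, mem_insert, mem_singleton,
      ldWeight_eq_sideSum G hG]
    constructor
    · rintro ⟨x, rfl⟩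
      cases s x <;> simp
    · rintro (rfl | rfl)
      exacts [⟨u, by rw [hu]; rfl⟩, ⟨v, by rw [hv]; rfl⟩]
  refine IsLeast.csInf_eq ⟨⟨f, hf_ld, ?_⟩, ?_⟩
  · rw [himage, card_pair (Ne.symm hne)]
  · rintro k ⟨g, hg, rfl⟩
    exact two_le_card_image_ldWeight hg huv

end Bipartition

theorem lexProd_bot_adj {α β : Type*} (G : SimpleGraph α) {x y : α × β} :
    (lexProd G (⊥ : SimpleGraph β)).Adj x y ↔ G.Adj x.1 y.1 := by
  simp [lexProd]

theorem SimpleGraph.completeBipartiteGraph_adj_iff_isLeft_ne {α β : Type*} {x y : α ⊕ β} :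
    (completeBipartiteGraph α β).Adj x y ↔ x.isLeft ≠ y.isLeft := by
  cases x <;> cases y <;> simp

theorem stmt_15_general (n a b : ℕ) (hn : 1 < n) (ha : 0 < a) (hb : 0 < b) :
    chiLD (lexProd (completeBipartiteGraph (Fin a) (Fin b))
      (⊥ : SimpleGraph (Fin n))) = 2 := by
  refine chiLD_eq_two_of_adj_iff _ (s := fun x => x.1.isLeft) ?_ fun x y => ?_
  · rintro (_ | _)
    exacts [⟨(Sum.inr ⟨0, hb⟩, ⟨0, by omega⟩), rfl⟩, ⟨(Sum.inl ⟨0, ha⟩, ⟨0, by omega⟩), rfl⟩]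
  · rw [lexProd_bot_adj, SimpleGraph.completeBipartiteGraph_adj_iff_isLeft_ne]

theorem stmt_15 (n a b : ℕ) (hn : 1 < n) (ha : 0 < a) (hb : 0 < b) (hab : a ≠ b) :
    chiLD (lexProd (completeBipartiteGraph (Fin a) (Fin b))
      (⊥ : SimpleGraph (Fin n))) = 2 :=
  stmt_15_general n a b hn ha hb
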